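/- For any finite nonempty alphabet Σ, the class 𝓛_{Σ,h} of morphic array pattern languages is closed under intersection: for all array patterns α and β there exists an array pattern γ such that L_{Σ,h}(γ) = L_{Σ,h}(α) ∩ L_{Σ,h}(β). -/

import Mathlib

/-- A nonempty rectangular two-dimensional word (array) over `σ`. -/
structure Arr (σ : Type) : Type where
  rows : ℕ
  cols : ℕ
  rows_pos : 0 < rows
  cols_pos : 0 < cols
  entry : Fin rows → Fin cols → σ

namespace Arr

variable {σ γ : Type}

/-- Column concatenation: place `V` to the right of `U`; `none` if heights differ. -/
def colCat (U V : Arr σ) : Option (Arr σ) :=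
  if h : U.rows = V.rows then
    some { rows := U.rows
           cols := U.cols + V.cols
           rows_pos := U.rows_pos
           cols_pos := by have := U.cols_pos; omega
           entry := fun i j =>
             if hj : (j : ℕ) < U.cols then U.entry i ⟨j, hj⟩
             else V.entry (Fin.cast h i) ⟨(j : ℕ) - U.cols, by have := j.isLt; omega⟩ }
  else none

/-- Row concatenation: place `V` below `U`; `none` if widths differ. -/
def rowCat (U V : Arr σ) : Option (Arr σ) :=
  if h : U.cols = V.cols then
    some { rows := U.rows + V.rows
           cols := U.cols
           rows_pos := by have := U.rows_pos; omega
           cols_pos := U.cols_pos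
           entry := fun i j =>
             if hi : (i : ℕ) < U.rows then U.entry ⟨i, hi⟩ j
             else V.entry ⟨(i : ℕ) - U.rows, by have := i.isLt; omega⟩ (Fin.cast h j) }
  else none

/-- A two-dimensional morphism: compatible with both concatenations,
with "both sides undefined" counting as equal. -/
def IsMorphism (h : Arr σ → Arr γ) : Prop :=
  (∀ V W : Arr σ, Option.map h (colCat V W) = colCat (h V) (h W)) ∧
  (∀ V W : Arr σ, Option.map h (rowCat V W) = rowCat (h V) (h W))

/-- Concatenate a nonempty list of (possibly undefined) arrays with the
given partial concatenation operation; `none` on the empty list. -/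
def catListO (op : Arr σ → Arr σ → Option (Arr σ)) : List (Option (Arr σ)) → Option (Arr σ)
  | [] => none
  | [a] => a
  | a :: b :: rest => a.bind fun x => (catListO op (b :: rest)).bind fun y => op x y

/-- `g_{⦶,⊖}`: substitute and assemble, first column-concatenating each row,
then row-concatenating the rows. -/
def subCR {X : Type} (g : X → Arr σ) (α : Arr X) : Option (Arr σ) :=
  catListO rowCat (List.ofFn fun i : Fin α.rows =>
    catListO colCat (List.ofFn fun j : Fin α.cols => some (g (α.entry i j))))

/-- `g_{⊖,⦶}`: substitute and assemble, first row-concatenating each column,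
then column-concatenating the columns. -/
def subRC {X : Type} (g : X → Arr σ) (α : Arr X) : Option (Arr σ) :=
  catListO colCat (List.ofFn fun j : Fin α.cols =>
    catListO rowCat (List.ofFn fun i : Fin α.rows => some (g (α.entry i j))))

/-- A substitution is uniform if all images have the same dimensions. -/
def Uniform {X : Type} (g : X → Arr σ) : Prop :=
  ∃ m n : ℕ, ∀ x : X, (g x).rows = m ∧ (g x).cols = n

end Arr

open Arr

/-- The five modes of array pattern languages. -/
inductive Mode | h | p | r | c | rc
deriving DecidableEq

/-- The array pattern language of an array pattern (an array over the
variables `ℕ`) in each mode. -/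
def langOf (σ : Type) : Mode → Arr ℕ → Set (Arr σ)
  | Mode.h, α => {W | ∃ g : Arr ℕ → Arr σ, IsMorphism g ∧ g α = W}
  | Mode.p, α => {W | ∃ s : ℕ → Arr σ, subCR s α = some W ∧ subRC s α = some W}
  | Mode.r, α => {W | ∃ s : ℕ → Arr σ, subCR s α = some W}
  | Mode.c, α => {W | ∃ s : ℕ → Arr σ, subRC s α = some W}
  | Mode.rc, α =>
      {W | ∃ s : ℕ → Arr σ, subCR s α = some W} ∪ {W | ∃ s : ℕ → Arr σ, subRC s α = some W}

/-!
A two-dimensional morphism is determined by the images of the `1 × 1` arrays, and these all have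
one common size `m × n`; so `L(α)` consists of the arrays obtained from `α` by substituting an
`m × n` block for each variable (`blockSubst`).

Write `lcm (rows α) (rows β) = rows α * p = rows β * p'`, and similarly `q, q'` for the columns.
Subdividing every cell of `α` into `p × q` cells labelled by (variable, offset), and every cell of
`β` into `p' × q'` cells, gives two arrays of the same size. The pattern `γ` labels each position
by the class of its two labels in the equivalence they generate. It is a morphic image of both `α`
and `β`, hence `L(γ) ⊆ L(α) ∩ L(β)`. Conversely an array in both languages has `k × l`-block
structure over these positions, and each block is determined by the `α`-label and by the
`β`-label of its position, hence by the class: the array is a morphic image of `γ`.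
-/

theorem mul_add_lt_mul_of_lt {i r a m : ℕ} (hi : i < r) (ha : a < m) : i * m + a < r * m :=
  calc i * m + a < (i + 1) * m := by rw [add_one_mul]; omega
    _ ≤ r * m := Nat.mul_le_mul_right m hi

theorem exists_lcm_cofactors {a b : ℕ} (ha : 0 < a) (hb : 0 < b) :
    ∃ p p', 0 < p ∧ 0 < p' ∧ a * p = b * p' ∧ ∀ N, a ∣ N → b ∣ N → a * p ∣ N := by
  obtain ⟨p, hp⟩ := Nat.dvd_lcm_left a b
  obtain ⟨p', hp'⟩ := Nat.dvd_lcm_right a b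
  have hL := Nat.lcm_pos ha hb
  exact ⟨p, p', Nat.pos_of_mul_pos_left (hp ▸ hL), Nat.pos_of_mul_pos_left (hp' ▸ hL),
    hp.symm.trans hp', fun N haN hbN => hp ▸ Nat.lcm_dvd haN hbN⟩

namespace Arr

variable {X Y Z σ τ : Type}

theorem entry_congr {A B : Arr σ} (h : A = B) {i j : ℕ} (hiA : i < A.rows) (hjA : j < A.cols)
    (hiB : i < B.rows) (hjB : j < B.cols) :
    A.entry ⟨i, hiA⟩ ⟨j, hjA⟩ = B.entry ⟨i, hiB⟩ ⟨j, hjB⟩ := by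
  subst h; rfl

theorem ext_of_entry {A B : Arr σ} (hr : A.rows = B.rows) (hc : A.cols = B.cols)
    (he : ∀ i j, A.entry i j = B.entry (i.cast hr) (j.cast hc)) : A = B := by
  obtain ⟨r, c, _, _, e⟩ := A
  obtain ⟨r', c', _, _, e'⟩ := B
  dsimp only at hr hc
  subst hr hc
  congr
  exact funext fun i => funext fun j => he i j

def map (φ : X → Y) (A : Arr X) : Arr Y :=
  { A with entry := fun i j => φ (A.entry i j) }

def cell (x : X) : Arr X := ⟨1, 1, one_pos, one_pos, fun _ _ => x⟩

theorem eq_cell {A : Arr X} (hr : A.rows = 1) (hc : A.cols = 1) :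
    A = cell (A.entry ⟨0, A.rows_pos⟩ ⟨0, A.cols_pos⟩) :=
  ext_of_entry hr hc fun i j => congr_arg₂ A.entry (Fin.ext (by omega)) (Fin.ext (by omega))

section BlockSubst

variable {m n : ℕ} (hm : 0 < m) (hn : 0 < n)

/-- The image of `A` under the morphism sending each symbol `x` to the `m × n` block `f x`. -/
def blockSubst (f : X → Fin m → Fin n → σ) (A : Arr X) : Arr σ where
  rows := A.rows * m
  cols := A.cols * n
  rows_pos := Nat.mul_pos A.rows_pos hm
  cols_pos := Nat.mul_pos A.cols_pos hn
  entry i j := f (A.entry ⟨i / m, (Nat.div_lt_iff_lt_mul hm).2 i.isLt⟩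
      ⟨j / n, (Nat.div_lt_iff_lt_mul hn).2 j.isLt⟩)
    ⟨i % m, Nat.mod_lt _ hm⟩ ⟨j % n, Nat.mod_lt _ hn⟩

theorem blockSubst_entry_block (f : X → Fin m → Fin n → σ) (A : Arr X) (i : Fin A.rows)
    (j : Fin A.cols) (a : Fin m) (b : Fin n) :
    (blockSubst hm hn f A).entry ⟨i * m + a, mul_add_lt_mul_of_lt i.isLt a.isLt⟩
      ⟨j * n + b, mul_add_lt_mul_of_lt j.isLt b.isLt⟩ = f (A.entry i j) a b := by
  simp only [blockSubst]
  congr <;> simp [Nat.mul_comm _ m, Nat.mul_comm _ n, Nat.mul_add_div hm, Nat.mul_add_div hn,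
    Nat.div_eq_of_lt, Nat.mod_eq_of_lt]

theorem blockSubst_entry (f : X → Fin m → Fin n → σ) (A : Arr X) {i j : ℕ}
    (hi : i < (blockSubst hm hn f A).rows) (hj : j < (blockSubst hm hn f A).cols) :
    (blockSubst hm hn f A).entry ⟨i, hi⟩ ⟨j, hj⟩ =
      f (A.entry ⟨i / m, (Nat.div_lt_iff_lt_mul hm).2 hi⟩ ⟨j / n, (Nat.div_lt_iff_lt_mul hn).2 hj⟩)
        ⟨i % m, Nat.mod_lt _ hm⟩ ⟨j % n, Nat.mod_lt _ hn⟩ :=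
  rfl

theorem blockSubst_map (φ : X → Y) (f : Y → Fin m → Fin n → σ) (A : Arr X) :
    blockSubst hm hn f (A.map φ) = blockSubst hm hn (f ∘ φ) A :=
  rfl

theorem map_blockSubst (f : X → Fin m → Fin n → σ) (φ : σ → τ) (A : Arr X) :
    (blockSubst hm hn f A).map φ = blockSubst hm hn (fun x a b => φ (f x a b)) A :=
  rfl

theorem blockSubst_blockSubst {p q : ℕ} (hp : 0 < p) (hq : 0 < q) (s : X → Fin p → Fin q → Y)
    (t : Y → Fin m → Fin n → σ) (A : Arr X) :
    blockSubst hm hn t (blockSubst hp hq s A) =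
      blockSubst (Nat.mul_pos hp hm) (Nat.mul_pos hq hn)
        (fun x i j => t (s x ⟨i / m, (Nat.div_lt_iff_lt_mul hm).2 i.isLt⟩
          ⟨j / n, (Nat.div_lt_iff_lt_mul hn).2 j.isLt⟩)
          ⟨i % m, Nat.mod_lt _ hm⟩ ⟨j % n, Nat.mod_lt _ hn⟩) A := by
  refine ext_of_entry (Nat.mul_assoc ..) (Nat.mul_assoc ..) fun i j => ?_
  simp only [blockSubst, Fin.cast, mul_comm p m, mul_comm q n, ← Nat.div_div_eq_div_mul,
    Nat.mod_mul_right_div_self, Nat.mod_mul_right_mod]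

theorem blockSubst_colCat (f : X → Fin m → Fin n → σ) (V W : Arr X) :
    Option.map (blockSubst hm hn f) (colCat V W) =
      colCat (blockSubst hm hn f V) (blockSubst hm hn f W) := by
  by_cases h : V.rows = W.rows
  · have h' : (blockSubst hm hn f V).rows = (blockSubst hm hn f W).rows := congrArg (· * m) h
    rw [colCat, dif_pos h, colCat, dif_pos h', Option.map_some]
    refine congrArg some (ext_of_entry rfl (Nat.add_mul ..) fun ⟨i, hi⟩ ⟨j, hj⟩ => ?_)
    dsimp only [Fin.cast]
    rw [blockSubst_entry]
    dsimp only
    by_cases hjV : j < (blockSubst hm hn f V).cols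
    · have hjV' : j / n < V.cols := (Nat.div_lt_iff_lt_mul hn).2 hjV
      rw [dif_pos hjV, dif_pos hjV', blockSubst_entry]
    · have hjV' : ¬ j / n < V.cols := by rwa [Nat.div_lt_iff_lt_mul hn]
      have hcols : (blockSubst hm hn f V).cols = n * V.cols := mul_comm _ _
      have hle : n * V.cols ≤ j := hcols ▸ not_lt.1 hjV
      rw [dif_neg hjV, dif_neg hjV', blockSubst_entry]
      congr 2 <;> simp only [hcols, Nat.sub_mul_div, Nat.sub_mul_mod hle]
  · rw [colCat, dif_neg h, colCat, dif_neg]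
    · rfl
    · exact mt (Nat.eq_of_mul_eq_mul_right hm) h

theorem blockSubst_rowCat (f : X → Fin m → Fin n → σ) (V W : Arr X) :
    Option.map (blockSubst hm hn f) (rowCat V W) =
      rowCat (blockSubst hm hn f V) (blockSubst hm hn f W) := by
  by_cases h : V.cols = W.cols
  · have h' : (blockSubst hm hn f V).cols = (blockSubst hm hn f W).cols := congrArg (· * n) h
    rw [rowCat, dif_pos h, rowCat, dif_pos h', Option.map_some]
    refine congrArg some (ext_of_entry (Nat.add_mul ..) rfl fun ⟨i, hi⟩ ⟨j, hj⟩ => ?_)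
    dsimp only [Fin.cast]
    rw [blockSubst_entry]
    dsimp only
    by_cases hiV : i < (blockSubst hm hn f V).rows
    · have hiV' : i / m < V.rows := (Nat.div_lt_iff_lt_mul hm).2 hiV
      rw [dif_pos hiV, dif_pos hiV', blockSubst_entry]
    · have hiV' : ¬ i / m < V.rows := by rwa [Nat.div_lt_iff_lt_mul hm]
      have hrows : (blockSubst hm hn f V).rows = m * V.rows := mul_comm _ _
      have hle : m * V.rows ≤ i := hrows ▸ not_lt.1 hiV
      rw [dif_neg hiV, dif_neg hiV', blockSubst_entry]
      congr 2 <;> simp only [hrows, Nat.sub_mul_div, Nat.sub_mul_mod hle]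
  · rw [rowCat, dif_neg h, rowCat, dif_neg]
    · rfl
    · exact mt (Nat.eq_of_mul_eq_mul_right hn) h

theorem isMorphism_blockSubst (f : X → Fin m → Fin n → σ) : IsMorphism (blockSubst hm hn f) :=
  ⟨blockSubst_colCat hm hn f, blockSubst_rowCat hm hn f⟩

end BlockSubst

def takeRows (A : Arr X) (r : ℕ) (h0 : 0 < r) (h : r ≤ A.rows) : Arr X :=
  ⟨r, A.cols, h0, A.cols_pos, fun i j => A.entry (i.castLE h) j⟩

def dropRows (A : Arr X) (r : ℕ) (h : r < A.rows) : Arr X :=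
  ⟨A.rows - r, A.cols, Nat.sub_pos_of_lt h, A.cols_pos, fun i j => A.entry ⟨r + i, by omega⟩ j⟩

def takeCols (A : Arr X) (c : ℕ) (h0 : 0 < c) (h : c ≤ A.cols) : Arr X :=
  ⟨A.rows, c, A.rows_pos, h0, fun i j => A.entry i (j.castLE h)⟩

def dropCols (A : Arr X) (c : ℕ) (h : c < A.cols) : Arr X :=
  ⟨A.rows, A.cols - c, A.rows_pos, Nat.sub_pos_of_lt h, fun i j => A.entry i ⟨c + j, by omega⟩⟩

theorem rowCat_takeRows_dropRows (A : Arr X) {r : ℕ} (h0 : 0 < r) (h : r < A.rows) :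
    rowCat (A.takeRows r h0 h.le) (A.dropRows r h) = some A := by
  have hcols : (A.takeRows r h0 h.le).cols = (A.dropRows r h).cols := rfl
  rw [rowCat, dif_pos hcols]
  refine congrArg some (ext_of_entry (Nat.add_sub_cancel' h.le) rfl fun ⟨i, hi⟩ j => ?_)
  dsimp only
  split
  · rfl
  · rename_i hir
    replace hir : ¬ i < r := hir
    exact congrArg₂ A.entry (Fin.ext (show r + (i - r) = i by omega)) rfl

theorem colCat_takeCols_dropCols (A : Arr X) {c : ℕ} (h0 : 0 < c) (h : c < A.cols) :
    colCat (A.takeCols c h0 h.le) (A.dropCols c h) = some A := by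
  have hrows : (A.takeCols c h0 h.le).rows = (A.dropCols c h).rows := rfl
  rw [colCat, dif_pos hrows]
  refine congrArg some (ext_of_entry rfl (Nat.add_sub_cancel' h.le) fun i ⟨j, hj⟩ => ?_)
  dsimp only
  split
  · rfl
  · rename_i hjc
    replace hjc : ¬ j < c := hjc
    exact congrArg₂ A.entry rfl (Fin.ext (show c + (j - c) = j by omega))

namespace IsMorphism

variable {h h' : Arr X → Arr σ}

theorem comp {g : Arr σ → Arr τ} (hg : IsMorphism g) (hh : IsMorphism h) : IsMorphism (g ∘ h) :=
  ⟨fun V W => by rw [← Option.map_map, hh.1, hg.1]; rfl,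
    fun V W => by rw [← Option.map_map, hh.2, hg.2]; rfl⟩

theorem rows_cell (hh : IsMorphism h) (x y : X) : (h (cell x)).rows = (h (cell y)).rows := by
  by_contra hne
  have hcat := hh.1 (cell x) (cell y)
  have hxy : (cell x).rows = (cell y).rows := rfl
  rw [colCat, dif_pos hxy, colCat, dif_neg hne, Option.map_some] at hcat
  exact Option.some_ne_none _ hcat

theorem cols_cell (hh : IsMorphism h) (x y : X) : (h (cell x)).cols = (h (cell y)).cols := by
  by_contra hne
  have hcat := hh.2 (cell x) (cell y)
  have hxy : (cell x).cols = (cell y).cols := rfl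
  rw [rowCat, dif_pos hxy, rowCat, dif_neg hne, Option.map_some] at hcat
  exact Option.some_ne_none _ hcat

theorem apply_eq_of_rowCat_eq_some (hh : IsMorphism h) (hh' : IsMorphism h') {U V A : Arr X}
    (hA : rowCat U V = some A) (hU : h U = h' U) (hV : h V = h' V) : h A = h' A := by
  have hcat := hh.2 U V
  rwa [hA, hU, hV, ← hh'.2 U V, hA, Option.map_some, Option.map_some, Option.some_inj] at hcat

theorem apply_eq_of_colCat_eq_some (hh : IsMorphism h) (hh' : IsMorphism h') {U V A : Arr X}
    (hA : colCat U V = some A) (hU : h U = h' U) (hV : h V = h' V) : h A = h' A := by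
  have hcat := hh.1 U V
  rwa [hA, hU, hV, ← hh'.1 U V, hA, Option.map_some, Option.map_some, Option.some_inj] at hcat

theorem apply_eq_of_forall_cell (hh : IsMorphism h) (hh' : IsMorphism h')
    (hcell : ∀ x, h (cell x) = h' (cell x)) (A : Arr X) : h A = h' A := by
  by_cases hr : 1 < A.rows
  · exact hh.apply_eq_of_rowCat_eq_some hh' (rowCat_takeRows_dropRows A one_pos hr)
      (apply_eq_of_forall_cell hh hh' hcell _) (apply_eq_of_forall_cell hh hh' hcell _)
  by_cases hc : 1 < A.cols
  · exact hh.apply_eq_of_colCat_eq_some hh' (colCat_takeCols_dropCols A one_pos hc)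
      (apply_eq_of_forall_cell hh hh' hcell _) (apply_eq_of_forall_cell hh hh' hcell _)
  have := A.rows_pos
  have := A.cols_pos
  rw [eq_cell (A := A) (by omega) (by omega)]
  exact hcell _
termination_by A.rows + A.cols
decreasing_by all_goals simp only [takeRows, dropRows, takeCols, dropCols]; omega

theorem exists_eq_blockSubst [Nonempty X] (hh : IsMorphism h) :
    ∃ (m n : ℕ) (hm : 0 < m) (hn : 0 < n) (f : X → Fin m → Fin n → σ), h = blockSubst hm hn f := by
  let x₀ : X := Classical.arbitrary X
  refine ⟨_, _, (h (cell x₀)).rows_pos, (h (cell x₀)).cols_pos,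
    fun x i j => (h (cell x)).entry (i.cast (hh.rows_cell x₀ x)) (j.cast (hh.cols_cell x₀ x)), ?_⟩
  refine funext (hh.apply_eq_of_forall_cell (isMorphism_blockSubst ..) fun x => ?_)
  refine ext_of_entry ((hh.rows_cell x x₀).trans (one_mul _).symm)
    ((hh.cols_cell x x₀).trans (one_mul _).symm) fun i j => congrArg₂ (h (cell x)).entry
      (Fin.ext (Nat.mod_eq_of_lt (i.isLt.trans_eq (hh.rows_cell x x₀))).symm)
      (Fin.ext (Nat.mod_eq_of_lt (j.isLt.trans_eq (hh.cols_cell x x₀))).symm)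

end IsMorphism

theorem map_eq_map_of_blockSubst_eq {m n : ℕ} {hm : 0 < m} {hn : 0 < n} {A : Arr X} {B : Arr Y}
    {F : X → Fin m → Fin n → σ} {G : Y → Fin m → Fin n → σ}
    (h : blockSubst hm hn F A = blockSubst hm hn G B) : A.map F = B.map G := by
  have hr : A.rows = B.rows := Nat.eq_of_mul_eq_mul_right hm (congrArg rows h)
  have hc : A.cols = B.cols := Nat.eq_of_mul_eq_mul_right hn (congrArg cols h)
  refine ext_of_entry hr hc fun (i : Fin A.rows) (j : Fin A.cols) =>
    funext fun a => funext fun b => ?_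
  change F (A.entry i j) a b = G (B.entry (i.cast hr) (j.cast hc)) a b
  rw [← blockSubst_entry_block hm hn F, ← blockSubst_entry_block hm hn G]
  exact entry_congr h _ _ _ _

/-- `a` and `b` realize in `ℕ` the pushout of the two labellings of the common set of positions. -/
theorem exists_universal_map_eq_map [Countable Y] [Countable Z] (A : Arr Y) (B : Arr Z)
    (hr : A.rows = B.rows) (hc : A.cols = B.cols) :
    ∃ (a : Y → ℕ) (b : Z → ℕ), A.map a = B.map b ∧
      ∀ {T : Type} (F : Y → T) (G : Z → T), A.map F = B.map G →
        ∃ t : ℕ → T, t ∘ a = F ∧ t ∘ b = G := by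
  let r : Y ⊕ Z → Y ⊕ Z → Prop := fun u v => ∃ (i : Fin A.rows) (j : Fin A.cols),
    u = .inl (A.entry i j) ∧ v = .inr (B.entry (i.cast hr) (j.cast hc))
  obtain ⟨enc, henc⟩ := exists_injective_nat (Quot r)
  refine ⟨fun y => enc (Quot.mk r (.inl y)), fun z => enc (Quot.mk r (.inr z)),
    ext_of_entry hr hc fun i j => congrArg enc (Quot.sound ⟨i, j, rfl, rfl⟩), ?_⟩
  intro T F G hFG
  have hresp : ∀ u v, r u v → Sum.elim F G u = Sum.elim F G v := by
    rintro _ _ ⟨i, j, rfl, rfl⟩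
    exact entry_congr hFG i.isLt j.isLt (i.cast hr).isLt (j.cast hc).isLt
  let t₀ : ℕ → T := fun _ => F (A.entry ⟨0, A.rows_pos⟩ ⟨0, A.cols_pos⟩)
  exact ⟨Function.extend enc (Quot.lift _ hresp) t₀,
    funext fun y => henc.extend_apply _ t₀ (Quot.mk r (.inl y)),
    funext fun z => henc.extend_apply _ t₀ (Quot.mk r (.inr z))⟩

def subdivide {p q : ℕ} (hp : 0 < p) (hq : 0 < q) (A : Arr X) : Arr (X × Fin p × Fin q) :=
  blockSubst hp hq (fun x u v => (x, u, v)) A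

end Arr

theorem mem_langOf_h_iff {σ : Type} {α : Arr ℕ} {W : Arr σ} :
    W ∈ langOf σ Mode.h α ↔ ∃ (m n : ℕ) (hm : 0 < m) (hn : 0 < n) (f : ℕ → Fin m → Fin n → σ),
      blockSubst hm hn f α = W := by
  constructor
  · rintro ⟨g, hg, rfl⟩
    obtain ⟨m, n, hm, hn, f, rfl⟩ := hg.exists_eq_blockSubst
    exact ⟨m, n, hm, hn, f, rfl⟩
  · rintro ⟨m, n, hm, hn, f, rfl⟩
    exact ⟨_, isMorphism_blockSubst hm hn f, rfl⟩

theorem langOf_h_subset_of_mem {σ : Type} {α γ : Arr ℕ} (hγ : γ ∈ langOf ℕ Mode.h α) :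
    langOf σ Mode.h γ ⊆ langOf σ Mode.h α := by
  rintro W ⟨g, hg, rfl⟩
  obtain ⟨h, hh, rfl⟩ := hγ
  exact ⟨g ∘ h, hg.comp hh, rfl⟩

theorem map_subdivide_mem_langOf_h {α : Arr ℕ} {p q : ℕ} (hp : 0 < p) (hq : 0 < q)
    (a : ℕ × Fin p × Fin q → ℕ) : (subdivide hp hq α).map a ∈ langOf ℕ Mode.h α :=
  mem_langOf_h_iff.2 ⟨p, q, hp, hq, _, (map_blockSubst hp hq (fun x u v => (x, u, v)) a α).symm⟩

theorem dvd_of_mem_langOf_h {σ : Type} {α : Arr ℕ} {W : Arr σ} (hW : W ∈ langOf σ Mode.h α) :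
    α.rows ∣ W.rows ∧ α.cols ∣ W.cols := by
  obtain ⟨m, n, -, -, -, rfl⟩ := mem_langOf_h_iff.1 hW
  exact ⟨⟨m, rfl⟩, ⟨n, rfl⟩⟩

theorem exists_blockSubst_subdivide_eq {σ : Type} {α : Arr ℕ} {W : Arr σ}
    (hW : W ∈ langOf σ Mode.h α) {p q k l : ℕ} (hp : 0 < p) (hq : 0 < q) (hk : 0 < k) (hl : 0 < l)
    (hr : W.rows = α.rows * p * k) (hc : W.cols = α.cols * q * l) :
    ∃ F : ℕ × Fin p × Fin q → Fin k → Fin l → σ, blockSubst hk hl F (subdivide hp hq α) = W := by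
  obtain ⟨m, n, hm, hn, f, rfl⟩ := mem_langOf_h_iff.1 hW
  obtain rfl : m = p * k := Nat.eq_of_mul_eq_mul_left α.rows_pos (hr.trans (Nat.mul_assoc ..))
  obtain rfl : n = q * l := Nat.eq_of_mul_eq_mul_left α.cols_pos (hc.trans (Nat.mul_assoc ..))
  refine ⟨fun y a b => f y.1 ⟨y.2.1 * k + a, mul_add_lt_mul_of_lt y.2.1.isLt a.isLt⟩
    ⟨y.2.2 * l + b, mul_add_lt_mul_of_lt y.2.2.isLt b.isLt⟩, ?_⟩
  rw [subdivide, blockSubst_blockSubst]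
  congr
  funext x i j
  congr <;> exact Nat.div_add_mod' _ _

theorem stmt8_general {σ : Type} (α β : Arr ℕ) :
    ∃ γ : Arr ℕ, langOf σ Mode.h γ = langOf σ Mode.h α ∩ langOf σ Mode.h β := by
  obtain ⟨p, p', hp, hp', hpp', hR⟩ := exists_lcm_cofactors α.rows_pos β.rows_pos
  obtain ⟨q, q', hq, hq', hqq', hC⟩ := exists_lcm_cofactors α.cols_pos β.cols_pos
  obtain ⟨a, b, hab, huniv⟩ :=
    exists_universal_map_eq_map (subdivide hp hq α) (subdivide hp' hq' β) hpp' hqq'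
  have hγα := map_subdivide_mem_langOf_h hp hq (α := α) a
  have hγβ : (subdivide hp hq α).map a ∈ langOf ℕ Mode.h β :=
    hab ▸ map_subdivide_mem_langOf_h hp' hq' b
  refine ⟨_, subset_antisymm (fun W hW =>
    ⟨langOf_h_subset_of_mem hγα hW, langOf_h_subset_of_mem hγβ hW⟩) ?_⟩
  rintro W ⟨hWα, hWβ⟩
  obtain ⟨k, hk⟩ := hR W.rows (dvd_of_mem_langOf_h hWα).1 (dvd_of_mem_langOf_h hWβ).1
  obtain ⟨l, hl⟩ := hC W.cols (dvd_of_mem_langOf_h hWα).2 (dvd_of_mem_langOf_h hWβ).2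
  have hk0 : 0 < k := Nat.pos_of_mul_pos_left (hk ▸ W.rows_pos)
  have hl0 : 0 < l := Nat.pos_of_mul_pos_left (hl ▸ W.cols_pos)
  obtain ⟨F, hF⟩ := exists_blockSubst_subdivide_eq hWα hp hq hk0 hl0 hk hl
  obtain ⟨G, hG⟩ := exists_blockSubst_subdivide_eq hWβ hp' hq' hk0 hl0
    (by rw [hk, hpp']) (by rw [hl, hqq'])
  obtain ⟨t, hta, -⟩ := huniv F G (map_eq_map_of_blockSubst_eq (hF.trans hG.symm))
  exact mem_langOf_h_iff.2 ⟨k, l, hk0, hl0, t, by rw [blockSubst_map, hta, hF]⟩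

/-- the class of morphic (`h`) array pattern languages is closed
under intersection. -/
theorem stmt8 {σ : Type} [Fintype σ] [Nonempty σ] (α β : Arr ℕ) :
    ∃ γ : Arr ℕ, langOf σ Mode.h γ = langOf σ Mode.h α ∩ langOf σ Mode.h β :=
  stmt8_general α β
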